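/- Let T = Cat(d₁, d₂, …, d_ℓ) be a caterpillar tree of length ℓ ≥ 2 and let T₋₁ = Cat(d₁, d₂, …, d_{ℓ−1}). If T₋₁ is κ-two-sided strong edge-pre-colorable for an integer κ ≥ σ(T), then T is κ-two-sided strong edge-pre-colorable. -/

import Mathlib

open SimpleGraph

/-- The degree of a vertex (cardinality of its neighbor set). -/
noncomputable def ndeg {V : Type*} (G : SimpleGraph V) (v : V) : ℕ :=
  (G.neighborSet v).ncard

/-- `σ(G)`: the maximum of `deg x + deg y - 1` over all edges `xy` of `G`. -/
noncomputable def sigmaG {V : Type*} (G : SimpleGraph V) : ℕ :=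
  sSup {m | ∃ x y, G.Adj x y ∧ m = ndeg G x + ndeg G y - 1}

/-- The maximum degree `Δ(G)`. -/
noncomputable def maxDeg {V : Type*} (G : SimpleGraph V) : ℕ :=
  sSup (Set.range (ndeg G))

/-- Two edges are at distance at most two: they share an endpoint, or an endpoint of
one is adjacent to an endpoint of the other. -/
def EdgesNear {V : Type*} (G : SimpleGraph V) (e f : Sym2 V) : Prop :=
  ∃ u v, u ∈ e ∧ v ∈ f ∧ (u = v ∨ G.Adj u v)

/-- A strong edge-coloring: every two distinct edges at distance at most two
receive different colors. -/
def IsStrongEdgeColoring {V α : Type*} (G : SimpleGraph V) (φ : Sym2 V → α) : Prop :=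
  ∀ e ∈ G.edgeSet, ∀ f ∈ G.edgeSet, e ≠ f → EdgesNear G e f → φ e ≠ φ f

/-- The strong chromatic index `χ'ₛ(G)`: the least `k` such that `G` has a strong
edge-coloring with colors `0, …, k-1`. -/
noncomputable def strongChromaticIndex {V : Type*} (G : SimpleGraph V) : ℕ :=
  sInf {k | ∃ φ : Sym2 V → ℕ, (∀ e ∈ G.edgeSet, φ e < k) ∧ IsStrongEdgeColoring G φ}

/-- The set of edges incident with a vertex `v`. -/
def Einc {V : Type*} (G : SimpleGraph V) (v : V) : Set (Sym2 V) :=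
  {e ∈ G.edgeSet | v ∈ e}
/-- The vertex type of the caterpillar tree `Cat(d 1, …, d ℓ)`: the spine
`x_0, x_1, …, x_{ℓ+1}` (as `Fin (ℓ+2)`) together with `d (i+1) - 2` pendant leaves
attached to the spine vertex `x_{i+1}` for each `i : Fin ℓ`. -/
abbrev CatV (ℓ : ℕ) (d : ℕ → ℕ) : Type :=
  Fin (ℓ + 2) ⊕ (Σ i : Fin ℓ, Fin (d (i.val + 1) - 2))

/-- Generating relation for the caterpillar: consecutive spine vertices are adjacent,
and each leaf in the `i`-th leaf group is adjacent to the spine vertex `x_{i+1}`. -/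
def CatRel (ℓ : ℕ) (d : ℕ → ℕ) : CatV ℓ d → CatV ℓ d → Prop
  | Sum.inl i, Sum.inl j => (j : ℕ) = (i : ℕ) + 1
  | Sum.inr p, Sum.inl k => (k : ℕ) = (p.1 : ℕ) + 1
  | _, _ => False

/-- The caterpillar tree `Cat(d 1, …, d ℓ)` with spine `x_0, …, x_{ℓ+1}`, in which
the spine vertex `x_i` has degree `d i` for `1 ≤ i ≤ ℓ` (provided `d i ≥ 2`). -/
def Cat (ℓ : ℕ) (d : ℕ → ℕ) : SimpleGraph (CatV ℓ d) :=
  SimpleGraph.fromRel (CatRel ℓ d)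

/-- There exists a strong edge-coloring `φ` of `Cat ℓ d` using colors from `C` with
`φ(E 1) = C₁`, `φ(E ℓ) = Cl`, `φ(x₀x₁) = α₀` and `φ(x_ℓ x_{ℓ+1}) = αl`. -/
def CatPrecolorExists (ℓ : ℕ) (d : ℕ → ℕ) (C C₁ Cl : Finset ℕ) (α₀ αl : ℕ) : Prop :=
  ∃ φ : Sym2 (CatV ℓ d) → ℕ,
    (∀ e ∈ (Cat ℓ d).edgeSet, φ e ∈ C) ∧
    IsStrongEdgeColoring (Cat ℓ d) φ ∧
    φ '' Einc (Cat ℓ d) (Sum.inl ⟨1, by omega⟩) = ↑C₁ ∧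
    φ '' Einc (Cat ℓ d) (Sum.inl ⟨ℓ, by omega⟩) = ↑Cl ∧
    φ s(Sum.inl ⟨0, by omega⟩, Sum.inl ⟨1, by omega⟩) = α₀ ∧
    φ s(Sum.inl ⟨ℓ, by omega⟩, Sum.inl ⟨ℓ + 1, by omega⟩) = αl

/-- `Cat ℓ d` is `κ`-two-sided strong edge-pre-colorable: for every `κ`-set `C` of colors,
all `C₁, Cl ⊆ C` with `|C₁| = d 1`, `|Cl| = d ℓ`, and all `α₀ ∈ C₁`, `αl ∈ Cl`, there is
a strong edge-coloring `φ` of `Cat ℓ d` with colors from `C` such that `φ(E 1) = C₁`,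
`φ(E ℓ) = Cl`, `φ(x₀x₁) = α₀` and `φ(x_ℓ x_{ℓ+1}) = αl`. -/
def TwoSidedPrecolorable (ℓ : ℕ) (d : ℕ → ℕ) (κ : ℕ) : Prop :=
  ∀ C C₁ Cl : Finset ℕ, C.card = κ → C₁ ⊆ C → Cl ⊆ C →
    C₁.card = d 1 → Cl.card = d ℓ →
    ∀ α₀ ∈ C₁, ∀ αl ∈ Cl, CatPrecolorExists ℓ d C C₁ Cl α₀ αl

/-- `ℓ_σ` from the refined key lemma: `ℓ_5 = 8`, `ℓ_6 = ℓ_7 = 7`, `ℓ_σ = σ` for `σ ≥ 8`. -/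
def ellSigma (s : ℕ) : ℕ :=
  if s = 5 then 8 else if s ≤ 7 then 7 else s

/-!
Colour `T₋₁ = Cat(d₁, …, d_{ℓ-1})` with the prescribed `C₁` and `α₀`, with some
`α' ∈ C_ℓ \ {α_ℓ}` on its last pendant edge `x_{ℓ-1}x_ℓ`, and with `C_{ℓ-1} = {α'} ∪ S` at
`x_{ℓ-1}`, where `S ⊆ C \ C_ℓ` has `d_{ℓ-1} - 1` colours; `S` exists because
`κ ≥ σ(T) ≥ d_{ℓ-1} + d_ℓ - 1`. In `T` that pendant edge becomes a spine edge and all edges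
missing from `T₋₁` hang at `x_ℓ`: give `x_ℓx_{ℓ+1}` the colour `α_ℓ` and the `d_ℓ - 2` leaves
at `x_ℓ` the colours of `C_ℓ \ {α', α_ℓ}`. A new edge is within distance two only of other new
edges and of the edges at `x_{ℓ-1}`, whose colours lie in `C_{ℓ-1}`, which meets `C_ℓ` only in
`α'`.
-/

section Extension

variable {V V' α : Type*} {G : SimpleGraph V} {G' : SimpleGraph V'}

lemma EdgesNear.symm {e f : Sym2 V} (h : EdgesNear G e f) : EdgesNear G f e := by
  obtain ⟨u, v, hu, hv, huv⟩ := h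
  exact ⟨v, u, hv, hu, huv.imp Eq.symm Adj.symm⟩

lemma EdgesNear.of_map (ι : G ↪g G') {e f : Sym2 V}
    (h : EdgesNear G' (e.map ι) (f.map ι)) : EdgesNear G e f := by
  obtain ⟨_, _, hue, hvf, huv⟩ := h
  obtain ⟨u, hu, rfl⟩ := Sym2.mem_map.1 hue
  obtain ⟨v, hv, rfl⟩ := Sym2.mem_map.1 hvf
  exact ⟨u, v, hu, hv, huv.imp (fun h => ι.injective h) ι.map_adj_iff.1⟩

def IsPendantExtensionAt (ι : G ↪g G') (t : V) : Prop :=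
  ∀ ⦃u v⦄, G'.Adj u v → v ∉ Set.range ι → u = ι t

open Classical in
noncomputable def extendColoring [Nonempty V] (ι : V → V') (φ : Sym2 V → α) (c : V' → α)
    (e : Sym2 V') : α :=
  if h : ∃ v ∈ e, v ∉ Set.range ι then c h.choose else φ (e.map (Function.invFun ι))

variable {ι : G ↪g G'} {t : V} {φ : Sym2 V → α} {c : V' → α}

lemma IsPendantExtensionAt.edge_cases (hp : IsPendantExtensionAt ι t) {e : Sym2 V'}
    (he : e ∈ G'.edgeSet) :
    (∃ e' ∈ G.edgeSet, e'.map ι = e) ∨ ∃ v ∉ Set.range ι, e = s(ι t, v) := by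
  induction e with
  | _ u v =>
    have he : G'.Adj u v := he
    by_cases hv : v ∈ Set.range ι
    · by_cases hu : u ∈ Set.range ι
      · obtain ⟨a, rfl⟩ := hu
        obtain ⟨b, rfl⟩ := hv
        exact Or.inl ⟨s(a, b), ι.map_adj_iff.1 he, rfl⟩
      · exact Or.inr ⟨u, hu, by rw [hp he.symm hu, Sym2.eq_swap]⟩
    · exact Or.inr ⟨v, hv, by rw [hp he hv]⟩

lemma einc_embedding_apply (u : V) :
    Einc G' (ι u) = Sym2.map ι '' Einc G u ∪
      (fun v => s(ι u, v)) '' {v | v ∉ Set.range ι ∧ G'.Adj (ι u) v} := by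
  ext e
  constructor
  · rintro ⟨he, hu⟩
    obtain ⟨w, rfl⟩ := Sym2.mem_iff_exists.1 hu
    by_cases hw : w ∈ Set.range ι
    · obtain ⟨b, rfl⟩ := hw
      exact Or.inl ⟨s(u, b), ⟨ι.map_adj_iff.1 he, Sym2.mem_mk_left _ _⟩, rfl⟩
    · exact Or.inr ⟨w, ⟨hw, he⟩, rfl⟩
  · rintro (⟨e', ⟨he', hu⟩, rfl⟩ | ⟨w, ⟨-, hw⟩, rfl⟩)
    · exact ⟨ι.map_mem_edgeSet_iff.2 he', Sym2.mem_map.2 ⟨u, hu, rfl⟩⟩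
    · exact ⟨hw, Sym2.mem_mk_left _ _⟩

lemma IsPendantExtensionAt.exists_mem_near (hp : IsPendantExtensionAt ι t) {e : Sym2 V}
    {v : V'} (hv : v ∉ Set.range ι) (h : EdgesNear G' (e.map ι) s(ι t, v)) :
    ∃ u ∈ e, u = t ∨ G.Adj u t := by
  obtain ⟨_, q, hp', hq, hpq⟩ := h
  obtain ⟨u, hu, rfl⟩ := Sym2.mem_map.1 hp'
  refine ⟨u, hu, ?_⟩
  rcases Sym2.mem_iff.1 hq with rfl | rfl
  · exact hpq.imp (fun h => ι.injective h) ι.map_adj_iff.1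
  · rcases hpq with h | h
    · exact absurd ⟨u, h⟩ hv
    · exact Or.inl (ι.injective (hp h hv))

variable [Nonempty V]

lemma extendColoring_map (e : Sym2 V) : extendColoring ι φ c (e.map ι) = φ e := by
  have hold : ¬ ∃ v ∈ e.map ι, v ∉ Set.range ι := by
    rintro ⟨v, hv, hvι⟩
    obtain ⟨u, -, rfl⟩ := Sym2.mem_map.1 hv
    exact hvι ⟨u, rfl⟩
  rw [extendColoring, dif_neg hold, Sym2.map_map, Function.invFun_comp ι.injective, Sym2.map_id,
    id]

lemma extendColoring_mk_of_notMem_range {u v : V'} (hu : u ∈ Set.range ι)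
    (hv : v ∉ Set.range ι) : extendColoring ι φ c s(u, v) = c v := by
  have hnew : ∃ w ∈ s(u, v), w ∉ Set.range ι := ⟨v, Sym2.mem_mk_right u v, hv⟩
  obtain ⟨hmem, hw⟩ := hnew.choose_spec
  rw [extendColoring, dif_pos hnew]
  rcases Sym2.mem_iff.1 hmem with h | h
  · rw [← h] at hu
    exact absurd hu hw
  · rw [h]

lemma image_extendColoring_einc (u : V) :
    extendColoring ι φ c '' Einc G' (ι u) =
      φ '' Einc G u ∪ c '' {v | v ∉ Set.range ι ∧ G'.Adj (ι u) v} := by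
  rw [einc_embedding_apply, Set.image_union, Set.image_image, Set.image_image]
  congr 1
  · exact Set.image_congr fun e _ => extendColoring_map e
  · exact Set.image_congr fun v hv => extendColoring_mk_of_notMem_range ⟨u, rfl⟩ hv.1

lemma extendColoring_mem (hp : IsPendantExtensionAt ι t) {S : Set α}
    (hφ : ∀ e ∈ G.edgeSet, φ e ∈ S) (hc : ∀ v ∉ Set.range ι, c v ∈ S) :
    ∀ e ∈ G'.edgeSet, extendColoring ι φ c e ∈ S := by
  intro e he
  rcases hp.edge_cases he with ⟨e', he', rfl⟩ | ⟨v, hv, rfl⟩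
  · exact extendColoring_map e' ▸ hφ e' he'
  · exact extendColoring_mk_of_notMem_range ⟨t, rfl⟩ hv ▸ hc v hv

theorem isStrongEdgeColoring_extendColoring (hp : IsPendantExtensionAt ι t)
    (hφ : IsStrongEdgeColoring G φ) (hc : Set.InjOn c (Set.range ι)ᶜ)
    (havoid : ∀ v ∉ Set.range ι, ∀ e ∈ G.edgeSet,
      (∃ u ∈ e, u = t ∨ G.Adj u t) → φ e ≠ c v) :
    IsStrongEdgeColoring G' (extendColoring ι φ c) := by
  have old_new : ∀ e ∈ G.edgeSet, ∀ v ∉ Set.range ι, EdgesNear G' (e.map ι) s(ι t, v) →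
      extendColoring ι φ c (e.map ι) ≠ extendColoring ι φ c s(ι t, v) := by
    intro e he v hv hn
    rw [extendColoring_map, extendColoring_mk_of_notMem_range ⟨t, rfl⟩ hv]
    exact havoid v hv e he (hp.exists_mem_near hv hn)
  intro e he f hf hne hnear
  rcases hp.edge_cases he with ⟨e', he', rfl⟩ | ⟨v, hv, rfl⟩ <;>
    rcases hp.edge_cases hf with ⟨f', hf', rfl⟩ | ⟨w, hw, rfl⟩
  · rw [extendColoring_map, extendColoring_map]
    exact hφ e' he' f' hf' (fun h => hne (h ▸ rfl)) (hnear.of_map ι)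
  · exact old_new e' he' w hw hnear
  · exact (old_new f' hf' v hv hnear.symm).symm
  · rw [extendColoring_mk_of_notMem_range ⟨t, rfl⟩ hv,
      extendColoring_mk_of_notMem_range ⟨t, rfl⟩ hw]
    exact fun h => hne (by rw [hc hv hw h])

end Extension

section Caterpillar

variable {m : ℕ} {d : ℕ → ℕ}

lemma cat_adj_inl_inl {a b : Fin (m + 2)} :
    (Cat m d).Adj (Sum.inl a) (Sum.inl b) ↔ (b : ℕ) = a + 1 ∨ (a : ℕ) = b + 1 := by
  simp only [Cat, fromRel_adj, CatRel, ne_eq, Sum.inl.injEq, Fin.ext_iff]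
  omega

lemma cat_adj_inl_inr {a : Fin (m + 2)} {p : Σ i : Fin m, Fin (d (i + 1) - 2)} :
    (Cat m d).Adj (Sum.inl a) (Sum.inr p) ↔ (a : ℕ) = p.1 + 1 := by
  simp [Cat, CatRel]

lemma cat_adj_inr_inl {a : Fin (m + 2)} {p : Σ i : Fin m, Fin (d (i + 1) - 2)} :
    (Cat m d).Adj (Sum.inr p) (Sum.inl a) ↔ (a : ℕ) = p.1 + 1 := by
  simp [Cat, CatRel]

lemma cat_not_adj_inr_inr {p q : Σ i : Fin m, Fin (d (i + 1) - 2)} :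
    ¬ (Cat m d).Adj (Sum.inr p) (Sum.inr q) := by
  simp [Cat, CatRel]

variable (m d) in
def catEmbedding : Cat m d ↪g Cat (m + 1) d where
  toFun := Sum.map Fin.castSucc (Sigma.map Fin.castSucc fun _ j => j)
  inj' := Sum.map_injective.2 ⟨Fin.castSucc_injective _,
    (Fin.castSucc_injective _).sigma_map fun _ => Function.injective_id⟩
  map_rel_iff' := by
    rintro (a | ⟨i, j⟩) (b | ⟨k, l⟩) <;>
      simp [Sigma.map, cat_adj_inl_inl, cat_adj_inl_inr, cat_adj_inr_inl, cat_not_adj_inr_inr]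

variable (m d) in
def catLeaf (j : Fin (d (m + 1) - 2)) : CatV (m + 1) d := Sum.inr ⟨Fin.last m, j⟩

lemma compl_range_catEmbedding :
    (Set.range (catEmbedding m d))ᶜ =
      insert (Sum.inl ⟨m + 2, by omega⟩) (Set.range (catLeaf m d)) := by
  ext v
  simp only [Set.mem_compl_iff, Set.mem_insert_iff, Set.mem_range, not_exists]
  constructor
  · intro hv
    rcases v with a | ⟨i, j⟩
    · rcases Fin.eq_castSucc_or_eq_last a with ⟨b, rfl⟩ | rfl
      · exact absurd rfl (hv (Sum.inl b))
      · exact Or.inl rfl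
    · rcases Fin.eq_castSucc_or_eq_last i with ⟨k, rfl⟩ | rfl
      · exact absurd rfl (hv (Sum.inr ⟨k, j⟩))
      · exact Or.inr ⟨j, rfl⟩
  · rintro (rfl | ⟨j, rfl⟩) (b | ⟨k, l⟩) hw
    · simp [catEmbedding, Fin.ext_iff] at hw
      omega
    · simp [catEmbedding] at hw
    · simp [catEmbedding, catLeaf] at hw
    · have := congrArg (fun p => (p.1 : ℕ)) (Sum.inr_injective hw)
      simp [Sigma.map] at this
      omega

lemma isPendantExtensionAt_catEmbedding :
    IsPendantExtensionAt (catEmbedding m d) (Sum.inl ⟨m + 1, by omega⟩) := by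
  intro u v huv hv
  rw [← Set.mem_compl_iff, compl_range_catEmbedding] at hv
  rcases hv with rfl | ⟨j, rfl⟩ <;> rcases u with a | p
  · simp only [cat_adj_inl_inl] at huv
    simp [catEmbedding, Fin.ext_iff]
    omega
  · rw [cat_adj_inr_inl] at huv
    have := p.1.isLt
    simp at huv
    omega
  · rw [catLeaf, cat_adj_inl_inr] at huv
    simp [catEmbedding, Fin.ext_iff, huv]
  · exact absurd huv cat_not_adj_inr_inr

lemma cat_adj_of_notMem_range {v : CatV (m + 1) d} (hv : v ∉ Set.range (catEmbedding m d)) :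
    (Cat (m + 1) d).Adj (catEmbedding m d (Sum.inl ⟨m + 1, by omega⟩)) v := by
  rw [← Set.mem_compl_iff, compl_range_catEmbedding] at hv
  rcases hv with rfl | ⟨j, rfl⟩
  · simp [catEmbedding, cat_adj_inl_inl]
  · simp [catEmbedding, catLeaf, cat_adj_inl_inr]

lemma cat_adj_end_iff {v : CatV m d} :
    (Cat m d).Adj v (Sum.inl ⟨m + 1, by omega⟩) ↔ v = Sum.inl ⟨m, by omega⟩ := by
  rcases v with a | p
  · simp [cat_adj_inl_inl, Fin.ext_iff]
    omega
  · simp only [cat_adj_inr_inl, reduceCtorEq, iff_false]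
    have := p.1.isLt
    omega

lemma einc_cat_end :
    Einc (Cat m d) (Sum.inl ⟨m + 1, by omega⟩) =
      {s(Sum.inl ⟨m, by omega⟩, Sum.inl ⟨m + 1, by omega⟩)} := by
  ext e
  constructor
  · rintro ⟨he, hend⟩
    obtain ⟨w, rfl⟩ := Sym2.mem_iff_exists.1 hend
    have hw : w = Sum.inl ⟨m, by omega⟩ := cat_adj_end_iff.1 (Adj.symm he)
    rw [hw, Set.mem_singleton_iff, Sym2.eq_swap]
  · rintro rfl
    exact ⟨cat_adj_end_iff.2 rfl, Sym2.mem_mk_right _ _⟩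

lemma mem_of_near_cat_end {e : Sym2 (CatV m d)} (he : e ∈ (Cat m d).edgeSet)
    (h : ∃ u ∈ e,
      u = Sum.inl ⟨m + 1, by omega⟩ ∨ (Cat m d).Adj u (Sum.inl ⟨m + 1, by omega⟩)) :
    Sum.inl ⟨m, by omega⟩ ∈ e := by
  obtain ⟨u, hu, rfl | hadj⟩ := h
  · obtain ⟨w, rfl⟩ := Sym2.mem_iff_exists.1 hu
    rw [← cat_adj_end_iff.1 (Adj.symm he)]
    exact Sym2.mem_mk_right _ _
  · exact cat_adj_end_iff.1 hadj ▸ hu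

lemma exists_injOn_compl_range_catEmbedding {α : Type*} [DecidableEq α] {s : Finset α} {a : α}
    (ha : a ∈ s) (hs : s.card = d (m + 1) - 1) :
    ∃ c : CatV (m + 1) d → α, Set.InjOn c (Set.range (catEmbedding m d))ᶜ ∧
      c '' (Set.range (catEmbedding m d))ᶜ = s ∧ c (Sum.inl ⟨m + 2, by omega⟩) = a := by
  have hcard : (s.erase a).card = d (m + 1) - 2 := by
    rw [Finset.card_erase_of_mem ha, hs]
    omega
  set enum := ((s.erase a).equivFinOfCardEq hcard).symm
  have hleaf : Function.Injective (catLeaf m d) := fun j k h => by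
    simpa [catLeaf] using h
  set c := Function.extend (catLeaf m d) (fun j => (enum j : α)) fun _ => a
  have hc_leaf : ∀ j, c (catLeaf m d j) = enum j := hleaf.extend_apply _ _
  have hend : Sum.inl ⟨m + 2, by omega⟩ ∉ Set.range (catLeaf m d) := by
    rintro ⟨j, hj⟩
    simp [catLeaf] at hj
  have hc_end : c (Sum.inl ⟨m + 2, by omega⟩) = a := Function.extend_apply' _ _ _ hend
  have hrange : Set.range (c ∘ catLeaf m d) = ↑(s.erase a) := by
    ext x
    simp only [Set.mem_range, Function.comp_apply, hc_leaf]
    constructor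
    · rintro ⟨j, rfl⟩
      exact (enum j).2
    · exact fun hx => ⟨enum.symm ⟨x, hx⟩, by simp⟩
  refine ⟨c, ?_, ?_, hc_end⟩
  · rw [compl_range_catEmbedding, Set.injOn_insert hend]
    refine ⟨?_, ?_⟩
    · rintro _ ⟨j, rfl⟩ _ ⟨k, rfl⟩ h
      rw [hc_leaf, hc_leaf] at h
      rw [enum.injective (Subtype.ext h)]
    · rw [← Set.range_comp, hrange, hc_end]
      exact Finset.notMem_erase a s
  · rw [compl_range_catEmbedding, Set.image_insert_eq, ← Set.range_comp, hrange, hc_end,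
      ← Finset.coe_insert, Finset.insert_erase ha]

end Caterpillar

section Precoloring

variable {m : ℕ} {d : ℕ → ℕ}

lemma CatPrecolorExists.succ (hm : 1 ≤ m) {C C₁ Cm Cl : Finset ℕ} {α₀ α' αl : ℕ}
    (h : CatPrecolorExists m d C C₁ Cm α₀ α') (hClC : Cl ⊆ C) (hCl : Cl.card = d (m + 1))
    (hα' : α' ∈ Cl) (hαl : αl ∈ Cl.erase α') (hCmCl : ∀ c ∈ Cm, c ∈ Cl → c = α') :
    CatPrecolorExists (m + 1) d C C₁ Cl α₀ αl := by
  obtain ⟨φ, hφC, hφ, hφ₁, hφm, hφ₀, hφend⟩ := h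
  obtain ⟨c, hc_inj, hc_image, hc_end⟩ :=
    exists_injOn_compl_range_catEmbedding (m := m) (d := d) hαl
      (by rw [Finset.card_erase_of_mem hα', hCl])
  have hc_mem : ∀ v ∉ Set.range (catEmbedding m d), c v ∈ Cl.erase α' := fun v hv => by
    rw [← Finset.mem_coe, ← hc_image]
    exact Set.mem_image_of_mem c hv
  have hp := isPendantExtensionAt_catEmbedding (m := m) (d := d)
  refine ⟨extendColoring (catEmbedding m d) φ c, ?_, ?_, ?_, ?_, ?_, ?_⟩
  · exact extendColoring_mem hp hφC fun v hv => hClC (Finset.mem_of_mem_erase (hc_mem v hv))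
  · refine isStrongEdgeColoring_extendColoring hp hφ hc_inj fun v hv e he hnear heq => ?_
    have hφe : φ e ∈ Cm := by
      rw [← Finset.mem_coe, ← hφm]
      exact ⟨e, ⟨he, mem_of_near_cat_end he hnear⟩, rfl⟩
    have hcv := hc_mem v hv
    rw [← heq] at hcv
    exact Finset.ne_of_mem_erase hcv (hCmCl _ hφe (Finset.mem_of_mem_erase hcv))
  · have hno_new : {v | v ∉ Set.range (catEmbedding m d) ∧
        (Cat (m + 1) d).Adj (catEmbedding m d (Sum.inl ⟨1, by omega⟩)) v} = ∅ := by
      refine Set.eq_empty_of_forall_notMem fun v ⟨hv, hadj⟩ => ?_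
      have := (catEmbedding m d).injective (hp hadj hv)
      simp [Fin.ext_iff] at this
      omega
    exact (image_extendColoring_einc (φ := φ) (c := c) _).trans (by
      rw [hno_new, Set.image_empty, Set.union_empty, hφ₁])
  · have hall_new : {v | v ∉ Set.range (catEmbedding m d) ∧
        (Cat (m + 1) d).Adj (catEmbedding m d (Sum.inl ⟨m + 1, by omega⟩)) v} =
          (Set.range (catEmbedding m d))ᶜ :=
      Set.ext fun v => and_iff_left_of_imp cat_adj_of_notMem_range
    exact (image_extendColoring_einc (φ := φ) (c := c) _).trans (by
      rw [hall_new, hc_image, einc_cat_end, Set.image_singleton, hφend,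
        Set.singleton_union, ← Finset.coe_insert, Finset.insert_erase hα'])
  · exact (extendColoring_map _).trans hφ₀
  · have hnew : Sum.inl ⟨m + 2, by omega⟩ ∈ (Set.range (catEmbedding m d))ᶜ := by
      rw [compl_range_catEmbedding]
      exact Set.mem_insert _ _
    exact (extendColoring_mk_of_notMem_range (φ := φ)
      ⟨Sum.inl ⟨m + 1, by omega⟩, rfl⟩ hnew).trans hc_end

lemma TwoSidedPrecolorable.succ (hm : 1 ≤ m) (hdm : 0 < d m) (hdl : 2 ≤ d (m + 1)) {κ : ℕ}
    (hκ : d m + d (m + 1) - 1 ≤ κ) (h : TwoSidedPrecolorable m d κ) :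
    TwoSidedPrecolorable (m + 1) d κ := by
  intro C C₁ Cl hC hC₁C hClC hC₁ hCl α₀ hα₀ αl hαl
  obtain ⟨α', hα'⟩ : (Cl.erase αl).Nonempty := by
    rw [← Finset.card_pos, Finset.card_erase_of_mem hαl]
    omega
  obtain ⟨S, hSC, hS⟩ := Finset.exists_subset_card_eq
    (show d m - 1 ≤ (C \ Cl).card by rw [Finset.card_sdiff_of_subset hClC]; omega)
  have hα'S : α' ∉ S := fun h => (Finset.mem_sdiff.1 (hSC h)).2 (Finset.mem_of_mem_erase hα')
  have hSCl : ∀ c ∈ insert α' S, c ∈ Cl → c = α' := by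
    intro c hc hcCl
    rcases Finset.mem_insert.1 hc with rfl | hcS
    · rfl
    · exact absurd hcCl (Finset.mem_sdiff.1 (hSC hcS)).2
  refine CatPrecolorExists.succ hm (h C C₁ (insert α' S) hC hC₁C ?_ hC₁ ?_ α₀ hα₀ α'
    (Finset.mem_insert_self _ _)) hClC hCl (Finset.mem_of_mem_erase hα')
    (Finset.mem_erase.2 ⟨(Finset.ne_of_mem_erase hα').symm, hαl⟩) hSCl
  · exact Finset.insert_subset (hClC (Finset.mem_of_mem_erase hα'))
      (hSC.trans Finset.sdiff_subset)
  · rw [Finset.card_insert_of_notMem hα'S, hS]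
    omega

end Precoloring

section Degree

lemma le_sigmaG {V : Type*} [Finite V] (G : SimpleGraph V) {x y : V} (h : G.Adj x y) :
    ndeg G x + ndeg G y - 1 ≤ sigmaG G := by
  refine le_csSup ⟨2 * Nat.card V, ?_⟩ ⟨x, y, h, rfl⟩
  rintro n ⟨u, v, -, rfl⟩
  have hu : ndeg G u ≤ Nat.card V := Set.ncard_le_card _
  have hv : ndeg G v ≤ Nat.card V := Set.ncard_le_card _
  omega

variable {ℓ : ℕ} {d : ℕ → ℕ}

lemma neighborSet_cat_inl {i : ℕ} (h₁ : 1 ≤ i) (h₂ : i ≤ ℓ) :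
    (Cat ℓ d).neighborSet (Sum.inl ⟨i, by omega⟩) =
      {Sum.inl ⟨i - 1, by omega⟩, Sum.inl ⟨i + 1, by omega⟩} ∪
        Set.range (fun j : Fin (d (i - 1 + 1) - 2) => Sum.inr ⟨⟨i - 1, by omega⟩, j⟩) := by
  ext v
  rcases v with b | ⟨⟨k, hk⟩, j⟩
  · simp [cat_adj_inl_inl, Fin.ext_iff]
    omega
  · simp only [mem_neighborSet, cat_adj_inl_inr, Set.mem_union, Set.mem_insert_iff,
      Set.mem_singleton_iff, reduceCtorEq, or_self, false_or, Set.mem_range, Sum.inr.injEq]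
    constructor
    · rintro rfl
      exact ⟨j, rfl⟩
    · rintro ⟨j', hj'⟩
      have := congrArg (fun p => (p.1 : ℕ)) hj'
      simp only at this
      omega

lemma ndeg_cat_inl {i : ℕ} (h₁ : 1 ≤ i) (h₂ : i ≤ ℓ) (hdi : 2 ≤ d i) :
    ndeg (Cat ℓ d) (Sum.inl ⟨i, by omega⟩) = d i := by
  have hleaves : (Set.range (fun j : Fin (d (i - 1 + 1) - 2) =>
      (Sum.inr ⟨⟨i - 1, by omega⟩, j⟩ : CatV ℓ d))).ncard = d i - 2 := by
    rw [← Set.image_univ, Set.ncard_image_of_injective _ (fun _ _ h => by simpa using h),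
      Set.ncard_univ, Nat.card_eq_fintype_card, Fintype.card_fin, Nat.sub_add_cancel h₁]
  rw [ndeg, neighborSet_cat_inl h₁ h₂, Set.ncard_union_eq (by simp [Set.disjoint_left]),
    Set.ncard_pair (by simp), hleaves]
  omega

end Degree

theorem twoSided_of_shorter (ℓ : ℕ) (hℓ : 2 ≤ ℓ) (d : ℕ → ℕ)
    (hd : ∀ i, 1 ≤ i → i ≤ ℓ → 2 ≤ d i)
    (κ : ℕ) (hκ : sigmaG (Cat ℓ d) ≤ κ)
    (h : TwoSidedPrecolorable (ℓ - 1) d κ) :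
    TwoSidedPrecolorable ℓ d κ := by
  obtain ⟨m, rfl⟩ : ∃ m, ℓ = m + 1 := ⟨ℓ - 1, by omega⟩
  have hdm : 2 ≤ d m := hd m (by omega) (by omega)
  have hdl : 2 ≤ d (m + 1) := hd (m + 1) (by omega) le_rfl
  have hσ : d m + d (m + 1) - 1 ≤ sigmaG (Cat (m + 1) d) := by
    have hadj : (Cat (m + 1) d).Adj (Sum.inl ⟨m, by omega⟩) (Sum.inl ⟨m + 1, by omega⟩) :=
      cat_adj_inl_inl.2 (Or.inl rfl)
    have := le_sigmaG _ hadj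
    rwa [ndeg_cat_inl (by omega) (by omega) hdm, ndeg_cat_inl (by omega) le_rfl hdl] at this
  exact TwoSidedPrecolorable.succ (by omega) (by omega) hdl (hσ.trans hκ) h
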